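/- arXiv:1206.5410 — 4 statements merged into one kernel-verified Lean document; each statement's English description precedes it below -/
import Mathlib

section
/- Let $\{I_k\}_{k=0}^{\infty}$ and $\{A_k\}_{k=0}^{\infty}$ be sequences of nonnegative real numbers such that for every integer $M \geq 0$ we have $I_M^2 \cdot \sum_{k > M+1} I_k \leq A_M$ (assuming the sums converge). Then for every integer $M_0 \geq 0$, $\sum_{M_0 \leq j \leq \ell < k-1} I_k I_\ell I_j \leq \sum_{M_0 \leq j \leq \ell} \sqrt{A_j A_\ell}$. -/
/-!
For `j ≤ ℓ` the inner sum over `k` equals `I j * I ℓ * T ℓ`, where `T n = ∑_{k > n+1} I k`.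
Tails of a nonnegative series decrease, so `T ℓ ≤ T j` and
`(I j * I ℓ * T ℓ)² ≤ (I j ^ 2 * T j) * (I ℓ ^ 2 * T ℓ) ≤ A j * A ℓ`;
summing this bound over the pairs `(j, ℓ)` gives the claim.
-/

theorem antitone_tsum_add_nat {f : ℕ → ℝ} (hf : ∀ n, 0 ≤ f n) :
    Antitone fun n => ∑' k, f (n + k) := by
  intro m n hmn
  obtain ⟨d, rfl⟩ := Nat.exists_eq_add_of_le hmn
  by_cases hs : Summable f
  · have hshift : Summable fun i => f (m + i) := by
      simpa only [add_comm m] using (summable_nat_add_iff m).mpr hs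
    have hsplit := hshift.sum_add_tsum_nat_add d
    have hreindex : ∑' i, f (m + (i + d)) = ∑' i, f (m + d + i) :=
      tsum_congr fun i => by rw [add_comm i d, add_assoc]
    have hhead : 0 ≤ ∑ i ∈ Finset.range d, f (m + i) := Finset.sum_nonneg fun i _ => hf _
    dsimp only
    linarith
  -- Without summability every tail sum takes the junk value `0`.
  · have hs' : ∀ n, ¬Summable fun k => f (n + k) := fun n h =>
      hs ((summable_nat_add_iff n).mp (by simpa only [add_comm n] using h))
    simp only [tsum_eq_zero_of_not_summable (hs' _), le_refl]

theorem tsum_ite_lt_eq_tsum_add {M : Type*} [AddCommMonoid M] [TopologicalSpace M]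
    (g : ℕ → M) (n : ℕ) :
    ∑' k, (if n < k then g k else 0) = ∑' k, g (n + 1 + k) := by
  have hinj : Function.Injective fun k => n + 1 + k := add_right_injective _
  rw [← hinj.tsum_eq]
  · exact tsum_congr fun k => if_pos (by omega)
  · intro k hk
    have : n < k := by by_contra h; exact hk (if_neg h)
    exact ⟨k - (n + 1), show n + 1 + (k - (n + 1)) = k by omega⟩

theorem tsum_le_tsum_of_tsum_fiber_le {α β γ : Type*} {f : α × β × γ → ℝ} {g : α × β → ℝ}
    (hf : Summable f) (hg : Summable g) (h : ∀ a b, ∑' c, f (a, b, c) ≤ g (a, b)) :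
    ∑' p, f p ≤ ∑' q, g q := by
  let e := Equiv.prodAssoc α β γ
  have hfe : Summable fun p => f (e p) := e.summable_iff.mpr hf
  rw [← e.tsum_eq, hfe.tsum_prod' hfe.prod_factor]
  exact hfe.prod.tsum_le_tsum (fun q => h q.1 q.2) hg

theorem mul_mul_le_sqrt_of_sq_mul_le {a b s t x y : ℝ} (ht : 0 ≤ t) (hts : t ≤ s)
    (hx : a ^ 2 * s ≤ x) (hy : b ^ 2 * t ≤ y) : a * b * t ≤ √(x * y) := by
  apply Real.le_sqrt_of_sq_le
  have hxt : a ^ 2 * t ≤ x := (mul_le_mul_of_nonneg_left hts (sq_nonneg a)).trans hx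
  calc (a * b * t) ^ 2 = (a ^ 2 * t) * (b ^ 2 * t) := by ring
    _ ≤ x * y := mul_le_mul hxt hy (by positivity) ((by positivity : 0 ≤ a ^ 2 * t).trans hxt)

theorem stmt0_general (I A : ℕ → ℝ) (hI : ∀ n, 0 ≤ I n)
    (h : ∀ M : ℕ, I M ^ 2 * (∑' k : ℕ, I (M + 2 + k)) ≤ A M)
    (M0 : ℕ)
    (hsum3 : Summable (fun p : ℕ × ℕ × ℕ =>
      if M0 ≤ p.1 ∧ p.1 ≤ p.2.1 ∧ p.2.1 + 1 < p.2.2 then I p.2.2 * I p.2.1 * I p.1 else 0))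
    (hsum2 : Summable (fun p : ℕ × ℕ =>
      if M0 ≤ p.1 ∧ p.1 ≤ p.2 then Real.sqrt (A p.1 * A p.2) else 0)) :
    (∑' p : ℕ × ℕ × ℕ,
        if M0 ≤ p.1 ∧ p.1 ≤ p.2.1 ∧ p.2.1 + 1 < p.2.2 then I p.2.2 * I p.2.1 * I p.1 else 0)
      ≤ ∑' p : ℕ × ℕ, if M0 ≤ p.1 ∧ p.1 ≤ p.2 then Real.sqrt (A p.1 * A p.2) else 0 := by
  refine tsum_le_tsum_of_tsum_fiber_le hsum3 hsum2 fun j ℓ => ?_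
  by_cases hjℓ : M0 ≤ j ∧ j ≤ ℓ
  · simp only [hjℓ, true_and, mul_assoc]
    rw [tsum_ite_lt_eq_tsum_add, tsum_mul_right]
    calc _ = I j * I ℓ * ∑' k, I (ℓ + 2 + k) := by ring_nf
      _ ≤ _ := mul_mul_le_sqrt_of_sq_mul_le (tsum_nonneg fun k => hI _)
        (antitone_tsum_add_nat hI (by omega : j + 2 ≤ ℓ + 2)) (h j) (h ℓ)
  · have hzero : ∀ k, ¬(M0 ≤ j ∧ j ≤ ℓ ∧ ℓ + 1 < k) := fun k hk => hjℓ ⟨hk.1, hk.2.1⟩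
    simp [hzero, hjℓ]

theorem stmt0 (I A : ℕ → ℝ) (hI : ∀ n, 0 ≤ I n) (hA : ∀ n, 0 ≤ A n)
    (hIsum : Summable I)
    (h : ∀ M : ℕ, I M ^ 2 * (∑' k : ℕ, I (M + 2 + k)) ≤ A M)
    (M0 : ℕ)
    (hsum3 : Summable (fun p : ℕ × ℕ × ℕ =>
      if M0 ≤ p.1 ∧ p.1 ≤ p.2.1 ∧ p.2.1 + 1 < p.2.2 then I p.2.2 * I p.2.1 * I p.1 else 0))
    (hsum2 : Summable (fun p : ℕ × ℕ =>
      if M0 ≤ p.1 ∧ p.1 ≤ p.2 then Real.sqrt (A p.1 * A p.2) else 0)) :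
    (∑' p : ℕ × ℕ × ℕ,
        if M0 ≤ p.1 ∧ p.1 ≤ p.2.1 ∧ p.2.1 + 1 < p.2.2 then I p.2.2 * I p.2.1 * I p.1 else 0)
      ≤ ∑' p : ℕ × ℕ, if M0 ≤ p.1 ∧ p.1 ≤ p.2 then Real.sqrt (A p.1 * A p.2) else 0 :=
  stmt0_general I A hI h M0 hsum3 hsum2
end

section
/- With the notation of the dyadic-type intervals $\mathcal{I}_k(b) = (b^{-k-1}, b^{-k}]$ for $b>1$: for any $0 < R \leq 1$, any permutation-symmetric union $\bigcup_{\sigma \in S_3} \bigcup_{N(R,b) \leq j \leq \ell < k-1} \mathcal{I}_{\sigma(j)}(b) \times \mathcal{I}_{\sigma(\ell)}(b) \times \mathcal{I}_{\sigma(k)}(b)$ is contained in $\mathcal{S}_{\min(bR,1),\,1-1/b}$, where $\mathcal{S}_{R',\rho'} = \{(\epsilon_1,\epsilon_2,\epsilon_3) \in [0,R']^3 : \epsilon_0 - \epsilon_- > \rho'\,\epsilon_0\}$ with $\epsilon_- \leq \epsilon_0 \leq \epsilon_+$ the ordered coordinates. -/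
/-!
The coordinate lying in `𝓘_k(b)` is the smallest one, and since `k ≥ ℓ + 2` it is less than
`1/b` times each of the other two; hence `ε_- < ε_0 / b`, which is `ε_0 - ε_- > (1 - 1/b) ε_0`.
All coordinates are at most `b^{-j} ≤ b^{-N(R,b)}`, and `N(R,b) + 1 > log_b (1/R)` gives
`b^{-N(R,b)} < b R`.
-/

/-- The interval `𝓘_k(b) = (b^{-k-1}, b^{-k}]`. -/
def Ik (b : ℝ) (k : ℕ) : Set ℝ := Set.Ioc (b ^ (-(k : ℤ) - 1)) (b ^ (-(k : ℤ)))

/-- Minimum of the three coordinates. -/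
def eMin (ε : Fin 3 → ℝ) : ℝ := min (ε 0) (min (ε 1) (ε 2))

/-- Maximum of the three coordinates. -/
def eMax (ε : Fin 3 → ℝ) : ℝ := max (ε 0) (max (ε 1) (ε 2))

/-- Middle value of the three coordinates. -/
def eMid (ε : Fin 3 → ℝ) : ℝ := ε 0 + ε 1 + ε 2 - eMin ε - eMax ε

lemma zpow_neg_le_mul_of_floor_logb_le {b R : ℝ} (hb : 1 < b) (hR : 0 < R) {j : ℕ}
    (hj : ⌊Real.logb b (1 / R)⌋₊ ≤ j) : b ^ (-(j : ℤ)) ≤ b * R := by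
  set N := ⌊Real.logb b (1 / R)⌋₊
  have hbN : 1 / R < b ^ ((N : ℝ) + 1) :=
    (Real.logb_lt_iff_lt_rpow hb (by positivity)).1 (Nat.lt_floor_add_one _)
  rw [← Nat.cast_add_one, Real.rpow_natCast, div_lt_iff₀ hR] at hbN
  calc b ^ (-(j : ℤ)) ≤ b ^ (-(N : ℤ)) := zpow_le_zpow_right₀ hb.le (by omega)
    _ ≤ b ^ (-(N : ℤ)) * (b ^ (N + 1) * R) := le_mul_of_one_le_right (by positivity) hbN.le
    _ = b * R := by
      rw [pow_succ, zpow_neg, zpow_natCast]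
      field_simp

section Ik

variable {b x y : ℝ} {j m n : ℕ}

lemma pos_of_mem_Ik (hb : 0 < b) (hx : x ∈ Ik b n) : 0 < x :=
  (zpow_pos hb _).trans hx.1

lemma le_zpow_of_mem_Ik (hb : 1 ≤ b) (hjn : j ≤ n) (hx : x ∈ Ik b n) :
    x ≤ b ^ (-(j : ℤ)) :=
  hx.2.trans (zpow_le_zpow_right₀ hb (by omega))

lemma mul_lt_of_mem_Ik (hb : 1 ≤ b) (hnm : n + 1 < m) (hx : x ∈ Ik b n) (hy : y ∈ Ik b m) :
    b * y < x := by
  have hb0 : b ≠ 0 := by positivity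
  calc b * y ≤ b * b ^ (-(m : ℤ)) := by gcongr; exact hy.2
    _ = b ^ (-(m : ℤ) + 1) := by rw [zpow_add_one₀ hb0, mul_comm]
    _ ≤ b ^ (-(n : ℤ) - 1) := zpow_le_zpow_right₀ hb (by omega)
    _ < x := hx.1

end Ik

section OrderStatistics

variable (ε : Fin 3 → ℝ)

lemma eMin_eq_inf' : eMin ε = Finset.univ.inf' Finset.univ_nonempty ε := by
  simp [eMin, Fin.univ_succ]

lemma eMax_eq_sup' : eMax ε = Finset.univ.sup' Finset.univ_nonempty ε := by
  simp [eMax, Fin.univ_succ]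

variable (σ : Equiv.Perm (Fin 3))

lemma eMin_comp_perm : eMin (ε ∘ σ) = eMin ε := by
  rw [eMin_eq_inf', eMin_eq_inf', Finset.inf'_comp_eq_image]
  simp only [Finset.image_univ_equiv]

lemma eMax_comp_perm : eMax (ε ∘ σ) = eMax ε := by
  rw [eMax_eq_sup', eMax_eq_sup', Finset.sup'_comp_eq_image]
  simp only [Finset.image_univ_equiv]

lemma eMid_comp_perm : eMid (ε ∘ σ) = eMid ε := by
  have hsum := Equiv.sum_comp σ ε
  simp only [Fin.sum_univ_three] at hsum
  simp only [eMid, eMin_comp_perm, eMax_comp_perm, Function.comp_apply, hsum]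

variable {ε}

lemma eMin_eq_of_lt (h0 : ε 2 < ε 0) (h1 : ε 2 < ε 1) : eMin ε = ε 2 := by
  simp only [eMin, min_eq_right h1.le, min_eq_right h0.le]

lemma eMid_eq_of_lt (h0 : ε 2 < ε 0) (h1 : ε 2 < ε 1) : eMid ε = min (ε 0) (ε 1) := by
  have hmax : eMax ε = max (ε 0) (ε 1) := by
    simp only [eMax, max_eq_left h1.le]
  rw [eMid, eMin_eq_of_lt h0 h1, hmax]
  linarith [min_add_max (ε 0) (ε 1)]

end OrderStatistics

lemma one_sub_inv_mul_lt_sub {b c m : ℝ} (hb : 0 < b) (hcm : b * c < m) :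
    (1 - 1 / b) * m < m - c := by
  have : c < m / b := by rwa [lt_div_iff₀ hb, mul_comm]
  linarith [show (1 - 1 / b) * m = m - m / b by ring]

theorem stmt3_general (b R : ℝ) (hb : 1 < b) (hR0 : 0 < R)
    (j ℓ k : ℕ) (hj : Nat.floor (Real.log (1 / R) / Real.log b) ≤ j)
    (hjl : j ≤ ℓ) (hlk : ℓ + 1 < k)
    (σ : Equiv.Perm (Fin 3)) (ε : Fin 3 → ℝ)
    (h0 : ε (σ 0) ∈ Ik b j) (h1 : ε (σ 1) ∈ Ik b ℓ) (h2 : ε (σ 2) ∈ Ik b k) :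
    (∀ i, ε i ∈ Set.Icc (0 : ℝ) (min (b * R) 1)) ∧
    (1 - 1 / b) * eMid ε < eMid ε - eMin ε := by
  have hbound : b ^ (-(j : ℤ)) ≤ min (b * R) 1 :=
    le_min (zpow_neg_le_mul_of_floor_logb_le hb hR0 hj)
      (zpow_le_one_of_nonpos₀ hb.le (by omega))
  have hIcc {n : ℕ} {x : ℝ} (hjn : j ≤ n) (hx : x ∈ Ik b n) :
      x ∈ Set.Icc (0 : ℝ) (min (b * R) 1) :=
    ⟨(pos_of_mem_Ik (by positivity) hx).le, (le_zpow_of_mem_Ik hb.le hjn hx).trans hbound⟩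
  have hsep0 : b * ε (σ 2) < ε (σ 0) := mul_lt_of_mem_Ik hb.le (by omega) h0 h2
  have hsep1 : b * ε (σ 2) < ε (σ 1) := mul_lt_of_mem_Ik hb.le hlk h1 h2
  have hc : ε (σ 2) < b * ε (σ 2) := lt_mul_left (pos_of_mem_Ik (by positivity) h2) hb
  have hlt0 : ε (σ 2) < ε (σ 0) := hc.trans hsep0
  have hlt1 : ε (σ 2) < ε (σ 1) := hc.trans hsep1
  refine ⟨fun i => ?_, ?_⟩
  · obtain ⟨p, rfl⟩ := σ.surjective i
    fin_cases p
    exacts [hIcc le_rfl h0, hIcc hjl h1, hIcc (by omega) h2]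
  · rw [← eMid_comp_perm ε σ, ← eMin_comp_perm ε σ, eMid_eq_of_lt hlt0 hlt1,
      eMin_eq_of_lt hlt0 hlt1]
    exact one_sub_inv_mul_lt_sub (by positivity) (lt_min hsep0 hsep1)

theorem stmt3 (b R : ℝ) (hb : 1 < b) (hR0 : 0 < R) (hR1 : R ≤ 1)
    (j ℓ k : ℕ) (hj : Nat.floor (Real.log (1 / R) / Real.log b) ≤ j)
    (hjl : j ≤ ℓ) (hlk : ℓ + 1 < k)
    (σ : Equiv.Perm (Fin 3)) (ε : Fin 3 → ℝ)
    (h0 : ε (σ 0) ∈ Ik b j) (h1 : ε (σ 1) ∈ Ik b ℓ) (h2 : ε (σ 2) ∈ Ik b k) :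
    (∀ i, ε i ∈ Set.Icc (0 : ℝ) (min (b * R) 1)) ∧
    (1 - 1 / b) * eMid ε < eMid ε - eMin ε :=
  stmt3_general b R hb hR0 j ℓ k hj hjl hlk σ ε h0 h1 h2
end

section
/- Let $g$ be a finite nonnegative Borel measure on $[0,1]$ with $g(\{0\}) = 0$. Fix $b > 1$ and $0 < \delta < 2/3$, and set $\eta = \min\{1/3 - \delta/2,\ \delta/6\}$. Define intervals $\mathcal{I}_k = (b^{-k-1}, b^{-k}]$ for $k \geq 0$ and extended intervals $\mathcal{I}_k^{(E)} = \mathcal{I}_{k-1} \cup \mathcal{I}_k \cup \mathcal{I}_{k+1}$ (with $\mathcal{I}_{-1} = \emptyset$). Then at least one of the following holds: (i) there exists $k$ with $g(\mathcal{I}_k^{(E)}) \geq (1-\delta)\, g([0,1])$; or (ii) there exist sets $\mathcal{U}_1, \mathcal{U}_2$, each a union of intervals from the family $\{\mathcal{I}_k\}$, such that $\mathcal{U}_2 \cap \mathcal{U}_1^{(E)} = \emptyset$ and $\min\{g(\mathcal{U}_1), g(\mathcal{U}_2)\} \geq \eta\, g([0,1])$, where $\mathcal{U}_1^{(E)}$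 denotes the union of the extended intervals corresponding to the intervals forming $\mathcal{U}_1$. -/
open MeasureTheory

/-- The extended interval `𝓘_k^{(E)}(b) = 𝓘_{k-1} ∪ 𝓘_k ∪ 𝓘_{k+1}` (with `𝓘_{-1} = ∅`). -/
def IkE (b : ℝ) (k : ℕ) : Set ℝ :=
  ⋃ m ∈ {m : ℕ | m = k ∨ m = k + 1 ∨ m + 1 = k}, Ik b m

/-!
Let `N` be the first index at which the mass of `𝓘_0 ∪ … ∪ 𝓘_N` reaches `η g([0,1])`, so that
`𝓘_0 ∪ … ∪ 𝓘_{N-1}` carries less than that. If the tail `⋃_{k ≥ N+2} 𝓘_k` also carries at least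
`η g([0,1])`, the head and this tail are separated by `𝓘_{N+1}` and give (ii). Otherwise head and
tail together carry less than `2η g([0,1]) ≤ δ g([0,1])`, so the remaining mass sits on
`𝓘_N ∪ 𝓘_{N+1} ⊆ 𝓘_N^{(E)}` and gives (i).
-/

open Function
open scoped ENNReal

theorem ENNReal.exists_head_tail_ge_or_tsum_le_pair (a : ℕ → ℝ≥0∞) (c : ℝ≥0∞) :
    ∃ N, (c ≤ ∑ k ∈ Finset.range (N + 1), a k ∧ c ≤ ∑' k, a (k + (N + 2))) ∨
      ∑' k, a k ≤ c + c + (a N + a (N + 1)) := by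
  by_cases hex : ∃ n, c ≤ ∑ k ∈ Finset.range (n + 1), a k
  · classical
    set N := Nat.find hex
    have hhead : ∑ k ∈ Finset.range N, a k ≤ c := by
      cases hN : N with
      | zero => simp
      | succ m => exact (not_le.1 (Nat.find_min hex (show m < N by omega))).le
    refine ⟨N, ?_⟩
    by_cases htail : c ≤ ∑' k, a (k + (N + 2))
    · exact Or.inl ⟨Nat.find_spec hex, htail⟩
    · right
      calc ∑' k, a k
          = ∑ k ∈ Finset.range N, a k + (a N + a (N + 1)) + ∑' k, a (k + (N + 2)) := by
            rw [← ENNReal.summable.sum_add_tsum_nat_add', Finset.sum_range_succ,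
              Finset.sum_range_succ, add_assoc (∑ k ∈ Finset.range N, a k)]
        _ ≤ c + (a N + a (N + 1)) + c := by gcongr; exact (not_le.1 htail).le
        _ = c + c + (a N + a (N + 1)) := by ring
  · simp only [not_exists, not_le] at hex
    refine ⟨0, Or.inr (le_add_right (le_add_right ?_))⟩
    rw [ENNReal.tsum_eq_iSup_nat]
    refine iSup_le fun n => ?_
    exact (Finset.sum_le_sum_of_subset (Finset.range_subset_range.2 n.le_succ)).trans (hex n).le

section Intervals

variable {b : ℝ}

theorem measurableSet_Ik (b : ℝ) (k : ℕ) : MeasurableSet (Ik b k) := measurableSet_Ioc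

theorem pairwise_disjoint_Ik (hb : 1 ≤ b) : Pairwise (Disjoint on Ik b) := by
  suffices h : ∀ i j : ℕ, i < j → Disjoint (Ik b i) (Ik b j) by
    intro i j hij
    rcases lt_or_gt_of_ne hij with hlt | hlt
    exacts [h i j hlt, (h j i hlt).symm]
  intro i j hij
  refine Set.disjoint_left.2 fun x hxi hxj => ?_
  have : b ^ (-(j : ℤ)) ≤ b ^ (-(i : ℤ) - 1) := zpow_le_zpow_right₀ hb (by omega)
  exact absurd (hxj.2.trans this) (not_le.2 hxi.1)

theorem iUnion_Ik (hb : 1 < b) : ⋃ k, Ik b k = Set.Ioc 0 1 := by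
  ext x
  simp only [Set.mem_iUnion, Ik, Set.mem_Ioc]
  constructor
  · rintro ⟨k, hlow, hup⟩
    exact ⟨(zpow_pos (zero_lt_one.trans hb) _).trans hlow,
      hup.trans (zpow_le_one_of_nonpos₀ hb.le (by omega))⟩
  · rintro ⟨hx0, hx1⟩
    obtain ⟨n, hlow, hup⟩ := exists_mem_Ioc_zpow hx0 hb
    have hn : n < 0 := by
      rw [← zpow_lt_zpow_iff_right₀ hb, zpow_zero]
      exact hlow.trans_le hx1
    obtain ⟨k, hk⟩ := Int.eq_ofNat_of_zero_le (by omega : 0 ≤ -(n + 1))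
    refine ⟨k, ?_, ?_⟩
    · rwa [show -(k : ℤ) - 1 = n by omega]
    · rwa [show -(k : ℤ) = n + 1 by omega]

theorem disjoint_Ik_IkE {i j : ℕ} (hb : 1 ≤ b) (hij : j + 1 < i ∨ i + 1 < j) :
    Disjoint (Ik b i) (IkE b j) :=
  Set.disjoint_iUnion₂_right.2 fun _ hm =>
    pairwise_disjoint_Ik hb (by rcases hm with rfl | rfl | rfl <;> omega)

theorem Ik_union_Ik_succ_subset_IkE (b : ℝ) (k : ℕ) : Ik b k ∪ Ik b (k + 1) ⊆ IkE b k := by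
  rintro x (hx | hx) <;> simp only [IkE, Set.mem_iUnion, Set.mem_ofPred_eq]
  exacts [⟨k, Or.inl rfl, hx⟩, ⟨k + 1, Or.inr (Or.inl rfl), hx⟩]

variable {μ : Measure ℝ}

theorem tsum_measure_Ik (hb : 1 < b) (h0 : μ {0} = 0) :
    ∑' k, μ (Ik b k) = μ (Set.Icc 0 1) := by
  rw [← measure_iUnion (pairwise_disjoint_Ik hb.le) (measurableSet_Ik b), iUnion_Ik hb,
    ← Set.Icc_sdiff_left, measure_sdiff_null h0]

theorem measure_biUnion_range_Ik (hb : 1 ≤ b) (n : ℕ) :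
    μ (⋃ k ∈ (Finset.range n : Set ℕ), Ik b k) = ∑ k ∈ Finset.range n, μ (Ik b k) := by
  rw [Finset.set_biUnion_coe]
  exact measure_biUnion_finset (fun i _ j _ hij => pairwise_disjoint_Ik hb hij)
    fun k _ => measurableSet_Ik b k

theorem measure_biUnion_Ik_add (hb : 1 ≤ b) (n : ℕ) :
    μ (⋃ k ∈ Set.range (· + n), Ik b k) = ∑' k, μ (Ik b (k + n)) := by
  rw [Set.biUnion_range]
  exact measure_iUnion ((pairwise_disjoint_Ik hb).comp_of_injective (add_left_injective n))
    fun k => measurableSet_Ik b _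

theorem measure_Ik_add_measure_Ik_succ_le (hb : 1 ≤ b) (k : ℕ) :
    μ (Ik b k) + μ (Ik b (k + 1)) ≤ μ (IkE b k) := by
  rw [← measure_union (pairwise_disjoint_Ik hb (by omega)) (measurableSet_Ik b _)]
  exact measure_mono (Ik_union_Ik_succ_subset_IkE b k)

end Intervals

theorem stmt4_general (b δ : ℝ) (hb : 1 < b) (hδ0 : 0 < δ)
    (μ : Measure ℝ) [IsFiniteMeasure μ]
    (h0 : μ {0} = 0) :
    (∃ k : ℕ, ENNReal.ofReal (1 - δ) * μ (Set.Icc 0 1) ≤ μ (IkE b k)) ∨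
    (∃ S1 S2 : Set ℕ,
      (⋃ k ∈ S2, Ik b k) ∩ (⋃ k ∈ S1, IkE b k) = ∅ ∧
      ENNReal.ofReal (min (1 / 3 - δ / 2) (δ / 6)) * μ (Set.Icc 0 1) ≤ μ (⋃ k ∈ S1, Ik b k) ∧
      ENNReal.ofReal (min (1 / 3 - δ / 2) (δ / 6)) * μ (Set.Icc 0 1) ≤ μ (⋃ k ∈ S2, Ik b k)) := by
  set M := μ (Set.Icc 0 1)
  set η := min (1 / 3 - δ / 2) (δ / 6)
  obtain ⟨N, ⟨hhead, htail⟩ | hpair⟩ :=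
    ENNReal.exists_head_tail_ge_or_tsum_le_pair (fun k => μ (Ik b k)) (ENNReal.ofReal η * M)
  · refine Or.inr ⟨Finset.range (N + 1), Set.range (· + (N + 2)), ?_, ?_, ?_⟩
    · refine Set.disjoint_iff_inter_eq_empty.1 (Set.disjoint_iUnion₂_left.2 fun i hi =>
        Set.disjoint_iUnion₂_right.2 fun j hj => disjoint_Ik_IkE hb.le ?_)
      obtain ⟨i, rfl⟩ := hi
      simp only [Finset.coe_range, Set.mem_Iio] at hj
      dsimp only
      omega
    · rwa [measure_biUnion_range_Ik hb.le]
    · rwa [measure_biUnion_Ik_add hb.le]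
  · refine Or.inl ⟨N, ?_⟩
    rw [tsum_measure_Ik hb h0] at hpair
    have hη : ENNReal.ofReal η ≤ ENNReal.ofReal (δ / 2) :=
      ENNReal.ofReal_le_ofReal ((min_le_right _ _).trans (by linarith))
    have hηδ : ENNReal.ofReal η * M + ENNReal.ofReal η * M ≤ ENNReal.ofReal δ * M := by
      rw [← add_mul, ← add_halves δ, ENNReal.ofReal_add (by positivity) (by positivity)]
      gcongr
    calc ENNReal.ofReal (1 - δ) * M = M - ENNReal.ofReal δ * M := by
          rw [ENNReal.ofReal_sub _ hδ0.le, ENNReal.ofReal_one, ENNReal.sub_mul fun _ _ =>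
            measure_ne_top μ _, one_mul]
      _ ≤ μ (Ik b N) + μ (Ik b (N + 1)) :=
          tsub_le_iff_right.2 (hpair.trans (by rw [add_comm]; gcongr))
      _ ≤ μ (IkE b N) := measure_Ik_add_measure_Ik_succ_le hb.le N

theorem stmt4 (b δ : ℝ) (hb : 1 < b) (hδ0 : 0 < δ) (hδ1 : δ < 2 / 3)
    (μ : Measure ℝ) [IsFiniteMeasure μ]
    (hsupp : μ ((Set.Icc (0 : ℝ) 1)ᶜ) = 0) (h0 : μ {0} = 0) :
    (∃ k : ℕ, ENNReal.ofReal (1 - δ) * μ (Set.Icc 0 1) ≤ μ (IkE b k)) ∨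
    (∃ S1 S2 : Set ℕ,
      (⋃ k ∈ S2, Ik b k) ∩ (⋃ k ∈ S1, IkE b k) = ∅ ∧
      ENNReal.ofReal (min (1 / 3 - δ / 2) (δ / 6)) * μ (Set.Icc 0 1) ≤ μ (⋃ k ∈ S1, Ik b k) ∧
      ENNReal.ofReal (min (1 / 3 - δ / 2) (δ / 6)) * μ (Set.Icc 0 1) ≤ μ (⋃ k ∈ S2, Ik b k)) :=
  stmt4_general b δ hb hδ0 μ h0
end

section
/- For $0 < \theta < 1$ define $\sigma(X_-, X_0, X_+) = (X_+ + X_- - X_0)^\theta + (X_+ + X_0 - X_-)^\theta - 2 X_+^\theta$ for $0 \leq X_- \leq X_0 \leq X_+$ with $X_+ > 0$. Then there exists a constant $A_\theta > 0$ such that $\sigma(X_-, X_0, X_+) \leq -A_\theta\, X_+^\theta \left(\frac{X_0 - X_-}{X_+}\right)^2$ for all such triples. -/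
/-! By homogeneity, with `X₊ = 1` and `t = (X₀ - X₋) / X₊ ∈ [0, 1]`, the claim becomes
`(1 - t)^θ + (1 + t)^θ + A t² ≤ 2`. For `A = θ(1 - θ)/2` the left side is antitone in `t`: its
derivative is `θ((1 + t)^(θ-1) - (1 - t)^(θ-1)) + θ(1 - θ)t`, and Bernoulli's inequality gives
`(1 + t)^(θ-1) ≤ 1 ≤ (1 - t)^(θ-1) - (1 - θ)t`. -/

open Real Set

theorem one_add_mul_le_one_sub_rpow_neg {s p : ℝ} (hs : s < 1) (hp₀ : 0 ≤ p) (hp₁ : p ≤ 1) :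
    1 + p * s ≤ (1 - s) ^ (-p) := by
  have hbern : (1 - s) ^ p ≤ 1 - p * s := by
    simpa [sub_eq_add_neg] using rpow_one_add_le_one_add_mul_self (s := -s) (by linarith) hp₀ hp₁
  have hpos : 0 < (1 - s) ^ p := rpow_pos_of_pos (by linarith) p
  rw [rpow_neg (by linarith), ← one_div, le_div_iff₀ hpos]
  rcases le_total (1 + p * s) 0 with h | h
  · nlinarith
  · nlinarith [mul_le_mul_of_nonneg_left hbern h, sq_nonneg (p * s)]

theorem rpow_one_add_sub_rpow_one_sub_le {θ s : ℝ} (hθ₀ : 0 ≤ θ) (hθ₁ : θ ≤ 1) (hs₀ : 0 ≤ s)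
    (hs₁ : s < 1) : (1 + s) ^ (θ - 1) - (1 - s) ^ (θ - 1) ≤ -((1 - θ) * s) := by
  have hplus : (1 + s) ^ (θ - 1) ≤ 1 := rpow_le_one_of_one_le_of_nonpos (by linarith) (by linarith)
  have hminus : 1 + (1 - θ) * s ≤ (1 - s) ^ (θ - 1) := by
    simpa using one_add_mul_le_one_sub_rpow_neg hs₁ (p := 1 - θ) (by linarith) (by linarith)
  linarith

theorem one_sub_rpow_add_one_add_rpow_add_mul_sq_le {θ t : ℝ} (hθ₀ : 0 < θ) (hθ₁ : θ ≤ 1)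
    (ht₀ : 0 ≤ t) (ht₁ : t ≤ 1) :
    (1 - t) ^ θ + (1 + t) ^ θ + θ * (1 - θ) / 2 * t ^ 2 ≤ 2 := by
  set f : ℝ → ℝ := fun s ↦ (1 - s) ^ θ + (1 + s) ^ θ + θ * (1 - θ) / 2 * s ^ 2
  have hf : AntitoneOn f (Icc 0 1) := by
    refine antitoneOn_of_hasDerivWithinAt_nonpos (f' := fun s ↦
      θ * ((1 + s) ^ (θ - 1) - (1 - s) ^ (θ - 1)) + θ * (1 - θ) * s) (convex_Icc 0 1) ?_ ?_ ?_
    · fun_prop (disch := positivity)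
    · rw [interior_Icc]
      rintro s ⟨hs₀, hs₁⟩
      have hm := (hasDerivAt_rpow_const (p := θ) (Or.inl (by linarith : 1 - s ≠ 0))).comp s
        ((hasDerivAt_id s).const_sub 1)
      have hp := (hasDerivAt_rpow_const (p := θ) (Or.inl (by linarith : 1 + s ≠ 0))).comp s
        ((hasDerivAt_id s).const_add 1)
      have hf' : HasDerivAt f _ s :=
        (hm.add hp).add ((hasDerivAt_pow 2 s).const_mul (θ * (1 - θ) / 2))
      exact (hf'.congr_deriv (by ring)).hasDerivWithinAt
    · rw [interior_Icc]
      rintro s ⟨hs₀, hs₁⟩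
      have := mul_le_mul_of_nonneg_left
        (rpow_one_add_sub_rpow_one_sub_le hθ₀.le hθ₁ hs₀.le hs₁) hθ₀.le
      linarith
  have := hf ⟨le_rfl, zero_le_one⟩ ⟨ht₀, ht₁⟩ ht₀
  norm_num [f] at this
  linarith

theorem stmt10 (θ : ℝ) (hθ0 : 0 < θ) (hθ1 : θ < 1) :
    ∃ A : ℝ, 0 < A ∧ ∀ Xm X0 Xp : ℝ, 0 ≤ Xm → Xm ≤ X0 → X0 ≤ Xp → 0 < Xp →
      (Xp + Xm - X0) ^ θ + (Xp + X0 - Xm) ^ θ - 2 * Xp ^ θ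
        ≤ -A * Xp ^ θ * ((X0 - Xm) / Xp) ^ (2 : ℕ) := by
  refine ⟨θ * (1 - θ) / 2, by nlinarith, fun Xm X0 Xp hm hm0 h0p hp ↦ ?_⟩
  set t := (X0 - Xm) / Xp
  have ht₀ : 0 ≤ t := div_nonneg (by linarith) hp.le
  have ht₁ : t ≤ 1 := (div_le_one hp).mpr (by linarith)
  have hXpt : Xp * t = X0 - Xm := mul_div_cancel₀ _ hp.ne'
  rw [show Xp + Xm - X0 = Xp * (1 - t) by linarith, show Xp + X0 - Xm = Xp * (1 + t) by linarith,
    mul_rpow hp.le (by linarith), mul_rpow hp.le (by linarith)]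
  have := mul_le_mul_of_nonneg_left
    (one_sub_rpow_add_one_add_rpow_add_mul_sq_le hθ0 hθ1.le ht₀ ht₁) (rpow_nonneg hp.le θ)
  linarith
end
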